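/- arXiv:2010.04201 — 6 statements merged into one kernel-verified Lean document; each statement's English description precedes it below -/
import Mathlib

section
/- (The momentum p_θ is the front-track curvature.) Let a ∈ ℝ and let x, y, θ, p_θ : ℝ → ℝ be twice differentiable functions satisfying the Hamiltonian system x' = a − p_θ sin θ, y' = p_θ cos θ, θ' = p_θ − a sin θ, p_θ' = a p_θ cos θ, together with the unit-speed condition (x'(t))² + (y'(t))² = 1 for all t. Then the signed curvature of the front track (x, y) equals p_θ, i.e. x'(t)·y''(t) − y'(t)·x''(t) = p_θ(t) for all t. -/
noncomputable section

theorem stmt6 (a : ℝ) (x y θ pθ : ℝ → ℝ)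
    (hx1 : Differentiable ℝ x) (hx2 : Differentiable ℝ (deriv x))
    (hy1 : Differentiable ℝ y) (hy2 : Differentiable ℝ (deriv y))
    (hθ1 : Differentiable ℝ θ) (hθ2 : Differentiable ℝ (deriv θ))
    (hpθ1 : Differentiable ℝ pθ) (hpθ2 : Differentiable ℝ (deriv pθ))
    (hx : ∀ t, deriv x t = a - pθ t * Real.sin (θ t))
    (hy : ∀ t, deriv y t = pθ t * Real.cos (θ t))
    (hθ : ∀ t, deriv θ t = pθ t - a * Real.sin (θ t))
    (hpθ : ∀ t, deriv pθ t = a * pθ t * Real.cos (θ t))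
    (hunit : ∀ t, (deriv x t) ^ 2 + (deriv y t) ^ 2 = 1) :
    ∀ t, deriv x t * deriv (deriv y) t - deriv y t * deriv (deriv x) t = pθ t := by
  intro t
  have hdy : deriv y = fun t => pθ t * Real.cos (θ t) := funext hy
  have hdx : deriv x = fun t => a - pθ t * Real.sin (θ t) := funext hx
  have hcos : HasDerivAt (fun s => Real.cos (θ s)) (-Real.sin (θ t) * deriv θ t) t :=
    (hθ1 t).hasDerivAt.cos
  have hsin : HasDerivAt (fun s => Real.sin (θ s)) (Real.cos (θ t) * deriv θ t) t :=
    (hθ1 t).hasDerivAt.sin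
  have hy'' : deriv (deriv y) t
      = deriv pθ t * Real.cos (θ t) + pθ t * (-Real.sin (θ t) * deriv θ t) := by
    rw [hdy]
    exact ((hpθ1 t).hasDerivAt.mul hcos).deriv
  have hx'' : deriv (deriv x) t
      = 0 - (deriv pθ t * Real.sin (θ t) + pθ t * (Real.cos (θ t) * deriv θ t)) := by
    rw [hdx]
    exact ((hasDerivAt_const t a).sub ((hpθ1 t).hasDerivAt.mul hsin)).deriv
  have hu := hunit t
  rw [hx t, hy t] at hu
  rw [hy'', hx'', hx t, hy t, hθ t, hpθ t]
  linear_combination pθ t * hu + (pθ t * (a ^ 2 - pθ t ^ 2) + pθ t ^ 3 - a * pθ t ^ 2 * Real.sin (θ t)) * Real.sin_sq_add_cos_sq (θ t)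
end
end

section
/- (Front tracks of bicycle geodesics are elasticae.) Let a ≥ 0 and let θ, κ : ℝ → ℝ be differentiable functions satisfying θ' = κ − a sin θ, κ' = a κ cos θ, and the unit-speed constraint (θ'(t))² + a² cos² θ(t) = 1 for all t. Then κ satisfies the energy form of the elastica equation (1/2)(κ')² + (1/8)κ⁴ + (A/2)κ² = B for all t, with constants A = −(a² + 1)/2 and B = −(a² − 1)²/8. In particular B ≤ 0, so the corresponding front track is a non-inflectional elastica or a straight line. -/
noncomputable section

theorem stmt7 (a : ℝ) (ha : 0 ≤ a) (θ κ : ℝ → ℝ)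
    (hθ1 : Differentiable ℝ θ) (hκ1 : Differentiable ℝ κ)
    (hθ : ∀ t, deriv θ t = κ t - a * Real.sin (θ t))
    (hκ : ∀ t, deriv κ t = a * κ t * Real.cos (θ t))
    (hunit : ∀ t, (deriv θ t) ^ 2 + a ^ 2 * Real.cos (θ t) ^ 2 = 1) :
    ∃ A B : ℝ, A = -(a ^ 2 + 1) / 2 ∧ B = -(a ^ 2 - 1) ^ 2 / 8 ∧ B ≤ 0 ∧
      ∀ t, (1/2) * (deriv κ t) ^ 2 + (1/8) * (κ t) ^ 4 + (A/2) * (κ t) ^ 2 = B := by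
  refine ⟨-(a ^ 2 + 1) / 2, -(a ^ 2 - 1) ^ 2 / 8, rfl, rfl, by nlinarith [sq_nonneg (a ^ 2 - 1)], fun t => ?_⟩
  have hu := hunit t
  rw [hθ t] at hu
  rw [hκ t]
  have hs : Real.sin (θ t) ^ 2 + Real.cos (θ t) ^ 2 = 1 := Real.sin_sq_add_cos_sq (θ t)
  set K := κ t
  set S := Real.sin (θ t)
  linear_combination
    (-(K^2 - 2*a*K*S + a^2 - 1)/8 + (K^2 + a^2 - 1)/4) * hu +
    (-a^2 * (-(K^2 - 2*a*K*S + a^2 - 1)/8 + (K^2 + a^2 - 1)/4) + (1/2)*a^2*K^2) * hs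
end
end

section
/- (Width of the front track.) Let a > 0 and let x, y, θ, κ : ℝ → ℝ be differentiable functions satisfying the bicycle geodesic system with parameter a. Then the function t ↦ κ(t) − a·y(t) is constant on ℝ. Consequently, if κ attains the value 1 + a at some time t₁ and the value |1 − a| at some time t₂, then |y(t₁) − y(t₂)| = (1 + a − |1 − a|)/a; this equals 2 when 0 < a ≤ 1 (a 'wide' front track, of width twice the frame length) and 2/a when a > 1 (a 'narrow' front track). -/
noncomputable section

theorem stmt9 (a : ℝ) (ha : 0 < a) (x y θ κ : ℝ → ℝ)
    (hx1 : Differentiable ℝ x) (hy1 : Differentiable ℝ y)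
    (hθ1 : Differentiable ℝ θ) (hκ1 : Differentiable ℝ κ)
    (hx : ∀ t, deriv x t = a - κ t * Real.sin (θ t))
    (hy : ∀ t, deriv y t = κ t * Real.cos (θ t))
    (hθ : ∀ t, deriv θ t = κ t - a * Real.sin (θ t))
    (hκ : ∀ t, deriv κ t = a * κ t * Real.cos (θ t))
    (hunit : ∀ t, (deriv θ t) ^ 2 + a ^ 2 * Real.cos (θ t) ^ 2 = 1) :
    (∀ s t : ℝ, κ s - a * y s = κ t - a * y t) ∧
    (∀ t₁ t₂ : ℝ, κ t₁ = 1 + a → κ t₂ = |1 - a| →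
      |y t₁ - y t₂| = (1 + a - |1 - a|) / a ∧
      (0 < a → a ≤ 1 → |y t₁ - y t₂| = 2) ∧
      (1 < a → |y t₁ - y t₂| = 2 / a)) := by
  have hconst : ∀ s t : ℝ, κ s - a * y s = κ t - a * y t := by
    have h : ∀ t, deriv (fun t => κ t - a * y t) t = 0 := by
      intro t
      rw [deriv_fun_sub (hκ1 t) ((hy1 t).const_mul a), deriv_const_mul _ (hy1 t),
        hκ t, hy t]
      ring
    intro s t
    have := is_const_of_deriv_eq_zero (f := fun t => κ t - a * y t)
      ((hκ1.sub (hy1.const_mul a))) h s t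
    simpa using this
  refine ⟨hconst, fun t₁ t₂ h₁ h₂ => ?_⟩
  have key : a * (y t₁ - y t₂) = 1 + a - |1 - a| := by
    have := hconst t₁ t₂
    rw [h₁, h₂] at this
    linarith
  have hnn : (0:ℝ) ≤ 1 + a - |1 - a| := by
    rcases abs_cases (1 - a) with ⟨h, _⟩ | ⟨h, _⟩ <;> rw [h] <;> linarith
  have hy12 : y t₁ - y t₂ = (1 + a - |1 - a|) / a := by
    field_simp
    linarith [key]
  have habs : |y t₁ - y t₂| = (1 + a - |1 - a|) / a := by
    rw [hy12, abs_of_nonneg (div_nonneg hnn ha.le)]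
  refine ⟨habs, fun _ hle => ?_, fun hgt => ?_⟩
  · rw [habs, abs_of_nonneg (by linarith)]
    field_simp
    ring
  · rw [habs, abs_of_neg (by linarith)]
    field_simp
    ring
end
end

section
/- (Classification of horizontal lifts of a line: the tractrix.) Let ℓ > 0 and let (b, f) be a bike path of frame length ℓ on ℝ with front track f(t) = (t, 0) for all t ∈ ℝ. Then exactly one of the following holds: b(t) = (t + ℓ, 0) for all t; or b(t) = (t − ℓ, 0) for all t; or there exist t₀ ∈ ℝ and ε ∈ {1, −1} such that b(t) = (t − ℓ tanh((t − t₀)/ℓ), ε·ℓ·sech((t − t₀)/ℓ)) for all t, i.e. the back track is a tractrix of width ℓ. In the tractrix case with ε = 1, the flipped front track 2b(t) − f(t) = (t − 2ℓ tanh((t − t₀)/ℓ), 2ℓ sech((t − t₀)/ℓ)) is an Euler soliton of width 2ℓ. -/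
noncomputable section

/-- The Euclidean plane. -/
abbrev Plane := EuclideanSpace ℝ (Fin 2)

/-- The point `(a, b)` of the plane. -/
def pt (a b : ℝ) : Plane := WithLp.toLp 2 ![a, b]

/-- A bike path of frame length `ℓ` on the set `I`: differentiable back and front
tracks `b, f` with `‖f - b‖ = ℓ` and the no-skid condition (`b'` parallel to `f - b`). -/
def IsBikePath (ℓ : ℝ) (I : Set ℝ) (b f : ℝ → Plane) : Prop :=
  (∀ t ∈ I, DifferentiableAt ℝ b t) ∧ (∀ t ∈ I, DifferentiableAt ℝ f t) ∧
  (∀ t ∈ I, ‖f t - b t‖ = ℓ) ∧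
  (∀ t ∈ I, ∃ c : ℝ, deriv b t = c • (f t - b t))

lemma key (ℓ : ℝ) (hℓ : 0 < ℓ) (x y : ℝ → ℝ)
    (hxy : ∀ t, x t ^ 2 + y t ^ 2 = ℓ ^ 2)
    (hx' : ∀ t, HasDerivAt x ((ℓ ^ 2 - x t ^ 2) / ℓ ^ 2) t)
    (hy' : ∀ t, HasDerivAt y (-(x t * y t) / ℓ ^ 2) t) :
    (∀ t, x t = -ℓ ∧ y t = 0) ∨ (∀ t, x t = ℓ ∧ y t = 0) ∨
    (∃ t₀ ε : ℝ, (ε = 1 ∨ ε = -1) ∧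
      ∀ t, x t = ℓ * Real.tanh ((t - t₀) / ℓ) ∧
        y t = ε * ℓ / Real.cosh ((t - t₀) / ℓ)) := by
  have hℓ0 : ℓ ≠ 0 := ne_of_gt hℓ
  have hxle : ∀ t, -ℓ ≤ x t ∧ x t ≤ ℓ := by
    intro t
    constructor
    · nlinarith [sq_nonneg (y t), hxy t, sq_nonneg (x t + ℓ)]
    · nlinarith [sq_nonneg (y t), hxy t, sq_nonneg (x t - ℓ)]
  have hxdiff : Differentiable ℝ x := fun t => (hx' t).differentiableAt
  have hmono : Monotone x := by
    apply monotone_of_deriv_nonneg hxdiff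
    intro t
    rw [(hx' t).deriv]
    have h1 := (hxle t).1; have h2 := (hxle t).2
    have : 0 ≤ ℓ ^ 2 - x t ^ 2 := by nlinarith
    positivity
  have hyzero : ∀ t, x t = -ℓ ∨ x t = ℓ → y t = 0 := by
    intro t ht
    have : y t ^ 2 = 0 := by rcases ht with h | h <;> nlinarith [hxy t]
    exact pow_eq_zero_iff (by norm_num) |>.mp this
  by_cases hA : ∃ s, x s = -ℓ
  · obtain ⟨s, hs⟩ := hA
    left
    have hxall : ∀ t, x t = -ℓ := by
      intro t
      rcases le_total t s with h | h
      · exact le_antisymm (hs ▸ hmono h) (hxle t).1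
      · -- G₁ = (ℓ + x t) * exp((-2/ℓ) * t) is antitone
        set G : ℝ → ℝ := fun t => (ℓ + x t) * Real.exp ((-2 / ℓ) * t) with hG
        have hGd : ∀ t, HasDerivAt G
            (((ℓ ^ 2 - x t ^ 2) / ℓ ^ 2) * Real.exp ((-2 / ℓ) * t)
              + (ℓ + x t) * (Real.exp ((-2 / ℓ) * t) * (-2 / ℓ))) t := by
          intro t
          have he : HasDerivAt (fun t : ℝ => Real.exp ((-2 / ℓ) * t))
              (Real.exp ((-2 / ℓ) * t) * (-2 / ℓ)) t := by
            simpa using (((hasDerivAt_id t).const_mul (-2 / ℓ)).exp)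
          exact ((hx' t).const_add ℓ).mul he
        have hGanti : Antitone G := by
          apply antitone_of_deriv_nonpos (fun t => (hGd t).differentiableAt)
          intro t
          rw [(hGd t).deriv]
          have h1 := (hxle t).1; have h2 := (hxle t).2
          have hkey : ((ℓ ^ 2 - x t ^ 2) / ℓ ^ 2) * Real.exp ((-2 / ℓ) * t)
              + (ℓ + x t) * (Real.exp ((-2 / ℓ) * t) * (-2 / ℓ))
              = -(((ℓ + x t) / ℓ) ^ 2) * Real.exp ((-2 / ℓ) * t) := by
            field_simp
            ring
          rw [hkey]
          exact mul_nonpos_of_nonpos_of_nonneg (neg_nonpos.mpr (sq_nonneg _))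
            (Real.exp_pos _).le
        have h0 : G t ≤ G s := hGanti h
        have hGs : G s = 0 := by simp [hG, hs]
        have hGt : 0 ≤ G t := by
          have := (hxle t).1
          have he : 0 < Real.exp ((-2 / ℓ) * t) := Real.exp_pos _
          have : 0 ≤ ℓ + x t := by linarith
          positivity
        have : G t = 0 := le_antisymm (hGs ▸ h0) hGt
        have he : Real.exp ((-2 / ℓ) * t) ≠ 0 := (Real.exp_pos _).ne'
        have := mul_eq_zero.mp this
        rcases this with h' | h'
        · linarith
        · exact absurd h' he
    exact fun t => ⟨hxall t, hyzero t (Or.inl (hxall t))⟩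
  · by_cases hB : ∃ s, x s = ℓ
    · obtain ⟨s, hs⟩ := hB
      right; left
      have hxall : ∀ t, x t = ℓ := by
        intro t
        rcases le_total s t with h | h
        · exact le_antisymm (hxle t).2 (hs ▸ hmono h)
        · set G : ℝ → ℝ := fun t => (ℓ - x t) * Real.exp ((2 / ℓ) * t) with hG
          have hGd : ∀ t, HasDerivAt G
              ((-((ℓ ^ 2 - x t ^ 2) / ℓ ^ 2)) * Real.exp ((2 / ℓ) * t)
                + (ℓ - x t) * (Real.exp ((2 / ℓ) * t) * (2 / ℓ))) t := by
            intro t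
            have he : HasDerivAt (fun t : ℝ => Real.exp ((2 / ℓ) * t))
                (Real.exp ((2 / ℓ) * t) * (2 / ℓ)) t := by
              simpa using (((hasDerivAt_id t).const_mul (2 / ℓ)).exp)
            exact ((hx' t).const_sub ℓ).mul he
          have hGmono : Monotone G := by
            apply monotone_of_deriv_nonneg (fun t => (hGd t).differentiableAt)
            intro t
            rw [(hGd t).deriv]
            have h1 := (hxle t).1; have h2 := (hxle t).2
            have hkey : (-((ℓ ^ 2 - x t ^ 2) / ℓ ^ 2)) * Real.exp ((2 / ℓ) * t)
                + (ℓ - x t) * (Real.exp ((2 / ℓ) * t) * (2 / ℓ))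
                = (((ℓ - x t) / ℓ) ^ 2) * Real.exp ((2 / ℓ) * t) := by
              field_simp
              ring
            rw [hkey]
            positivity
          have h0 : G t ≤ G s := hGmono h
          have hGs : G s = 0 := by simp [hG, hs]
          have hGt : 0 ≤ G t := by
            have := (hxle t).2
            have he : 0 < Real.exp ((2 / ℓ) * t) := Real.exp_pos _
            have : 0 ≤ ℓ - x t := by linarith
            positivity
          have : G t = 0 := le_antisymm (hGs ▸ h0) hGt
          have he : Real.exp ((2 / ℓ) * t) ≠ 0 := (Real.exp_pos _).ne'
          rcases mul_eq_zero.mp this with h' | h'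
          · linarith
          · exact absurd h' he
      exact fun t => ⟨hxall t, hyzero t (Or.inr (hxall t))⟩
    · -- case C
      right; right
      push_neg at hA hB
      have hp : ∀ t, 0 < ℓ + x t := by
        intro t
        rcases lt_or_eq_of_le (hxle t).1 with h | h
        · linarith
        · exact absurd h.symm (hA t)
      have hq : ∀ t, x t < ℓ := fun t => lt_of_le_of_ne (hxle t).2 (hB t)
      have hy0 : ∀ t, y t ≠ 0 := by
        intro t h
        have h2 : x t ^ 2 = ℓ ^ 2 := by nlinarith [hxy t]
        have : (x t - ℓ) * (x t + ℓ) = 0 := by nlinarith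
        rcases mul_eq_zero.mp this with h' | h'
        · exact hB t (by linarith)
        · exact hA t (by linarith)
      set ζ : ℝ → ℝ := fun t => y t / (ℓ + x t) with hζ
      have hζd : ∀ t, HasDerivAt ζ (-(ζ t) / ℓ) t := by
        intro t
        have := (hy' t).div ((hx' t).const_add ℓ) (hp t).ne'
        refine this.congr_deriv ?_
        have h1 := (hp t).ne'
        rw [hζ]
        field_simp
        ring
      have hconst : ∀ t, ζ t * Real.exp (t / ℓ) = ζ 0 := by
        have hd : ∀ t, HasDerivAt (fun t => ζ t * Real.exp (t / ℓ))
            ((-(ζ t) / ℓ) * Real.exp (t / ℓ) + ζ t * (Real.exp (t / ℓ) * (1 / ℓ))) t := by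
          intro t
          have h1 : HasDerivAt (fun t : ℝ => t / ℓ) (1 / ℓ) t := by
            simpa using (hasDerivAt_id t).div_const ℓ
          exact (hζd t).mul h1.exp
        have : ∀ t, deriv (fun t => ζ t * Real.exp (t / ℓ)) t = 0 := by
          intro t
          rw [(hd t).deriv]
          field_simp
          ring
        have := is_const_of_deriv_eq_zero (fun t => (hd t).differentiableAt) this
        intro t
        simpa using this t 0
      set K := ζ 0 with hK
      have hK0 : K ≠ 0 := div_ne_zero (hy0 0) (hp 0).ne'
      set ε : ℝ := if 0 < K then 1 else -1 with hε
      set t₀ : ℝ := ℓ * Real.log |K| with ht₀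
      have hεK : ε * |K| = K := by
        rcases lt_or_gt_of_ne hK0 with h | h
        · rw [hε, if_neg (by linarith), abs_of_neg h]; ring
        · rw [hε, if_pos h, abs_of_pos h]; ring
      have hεsq : ε ^ 2 = 1 := by rcases ite_eq_or_eq (0 < K) (1:ℝ) (-1) with h | h <;>
        rw [hε, h] <;> norm_num
      have hζeq : ∀ t, ζ t = ε * Real.exp (-((t - t₀) / ℓ)) := by
        intro t
        have h1 : ζ t = K * Real.exp (-(t / ℓ)) := by
          rw [← hconst t, mul_assoc, ← Real.exp_add]
          simp
        rw [h1]
        rw [show -((t - t₀) / ℓ) = t₀ / ℓ + -(t / ℓ) by ring, Real.exp_add]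
        rw [show t₀ / ℓ = Real.log |K| by rw [ht₀]; field_simp]
        rw [Real.exp_log (abs_pos.mpr hK0)]
        rw [← mul_assoc, hεK]
      refine ⟨t₀, ε, ?_, ?_⟩
      · rcases ite_eq_or_eq (0 < K) (1:ℝ) (-1) with h | h
        · left; rw [hε, h]
        · right; rw [hε, h]
      intro t
      set s := (t - t₀) / ℓ with hs
      have hyx : y t = ζ t * (ℓ + x t) :=
        (div_mul_cancel₀ (y t) (hp t).ne').symm
      have hE : 0 < Real.exp s := Real.exp_pos _
      have hcosh : 0 < Real.cosh s := Real.cosh_pos s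
      have hexpneg : Real.exp (-s) = (Real.exp s)⁻¹ := Real.exp_neg s
      have hzsq : ζ t ^ 2 = ((Real.exp s)⁻¹) ^ 2 := by
        rw [hζeq t, mul_pow, hεsq, one_mul, ← hs, hexpneg]
      have h0 : (ℓ + x t) * (x t * (1 + ((Real.exp s)⁻¹) ^ 2)
          - ℓ * (1 - ((Real.exp s)⁻¹) ^ 2)) = 0 := by
        have h2 := hxy t
        rw [hyx] at h2
        linear_combination h2 - (ℓ + x t) ^ 2 * hzsq
      have h1 : x t * (1 + ((Real.exp s)⁻¹) ^ 2) = ℓ * (1 - ((Real.exp s)⁻¹) ^ 2) := by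
        rcases mul_eq_zero.mp h0 with h' | h'
        · exact absurd h' (hp t).ne'
        · linarith
      have htanh : x t = ℓ * Real.tanh s := by
        rw [Real.tanh_eq_sinh_div_cosh, Real.sinh_eq, Real.cosh_eq, hexpneg] at *
        field_simp at h1 ⊢
        nlinarith [h1, hE]
      constructor
      · exact htanh
      · rw [hyx, htanh, hζeq t, ← hs, hexpneg]
        have hsc := Real.sinh_add_cosh s
        rw [Real.tanh_eq_sinh_div_cosh]
        field_simp
        linear_combination ε * hsc

theorem stmt12 (ℓ : ℝ) (hℓ : 0 < ℓ) (b f : ℝ → Plane)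
    (hbike : IsBikePath ℓ Set.univ b f)
    (hline : ∀ t : ℝ, f t = pt t 0) :
    ((∀ t : ℝ, b t = pt (t + ℓ) 0) ∨
      (∀ t : ℝ, b t = pt (t - ℓ) 0) ∨
      (∃ t₀ ε : ℝ, (ε = 1 ∨ ε = -1) ∧
        ∀ t : ℝ, b t = pt (t - ℓ * Real.tanh ((t - t₀) / ℓ))
          (ε * ℓ / Real.cosh ((t - t₀) / ℓ)))) ∧
    (∀ t₀ t : ℝ,
      (2:ℝ) • pt (t - ℓ * Real.tanh ((t - t₀) / ℓ)) (ℓ / Real.cosh ((t - t₀) / ℓ))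
          - pt t 0
        = pt (t - 2 * ℓ * Real.tanh ((t - t₀) / ℓ))
            (2 * ℓ / Real.cosh ((t - t₀) / ℓ))) := by

  obtain ⟨hb, hf, hnorm, hskid⟩ := hbike
  constructor
  · set x : ℝ → ℝ := fun t => t - b t 0 with hxdef
    set y : ℝ → ℝ := fun t => -(b t 1) with hydef
    have hfb0 : ∀ t, (f t - b t) 0 = x t := by
      intro t; simp [hline t, pt, hxdef]
    have hfb1 : ∀ t, (f t - b t) 1 = y t := by
      intro t; simp [hline t, pt, hydef]
    have hxy : ∀ t, x t ^ 2 + y t ^ 2 = ℓ ^ 2 := by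
      intro t
      have h := hnorm t (Set.mem_univ t)
      rw [EuclideanSpace.norm_eq] at h
      have hnn : (0:ℝ) ≤ ∑ i, ‖(f t - b t) i‖ ^ 2 := by positivity
      have h2 : ∑ i, ‖(f t - b t) i‖ ^ 2 = ℓ ^ 2 := by
        rw [← Real.sq_sqrt hnn, h]
      rw [Fin.sum_univ_two, hfb0 t, hfb1 t, Real.norm_eq_abs, Real.norm_eq_abs,
        sq_abs, sq_abs] at h2
      exact h2
    have hcomp : ∀ (i : Fin 2) (t : ℝ), HasDerivAt (fun t => b t i) (deriv b t i) t := by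
      intro i t
      exact (EuclideanSpace.proj i).hasFDerivAt.comp_hasDerivAt t
        (hb t (Set.mem_univ t)).hasDerivAt
    have hders : ∀ t, HasDerivAt x ((ℓ ^ 2 - x t ^ 2) / ℓ ^ 2) t ∧
        HasDerivAt y (-(x t * y t) / ℓ ^ 2) t := by
      intro t
      obtain ⟨c, hcc⟩ := hskid t (Set.mem_univ t)
      have hd0 : deriv b t 0 = c * x t := by
        rw [hcc]; simp [hfb0 t]
      have hd1 : deriv b t 1 = c * y t := by
        rw [hcc]; simp [hfb1 t]
      have hx1 : HasDerivAt x (1 - c * x t) t := by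
        have h := hcomp 0 t
        rw [hd0] at h
        exact (hasDerivAt_id t).sub h
      have hy1 : HasDerivAt y (-(c * y t)) t := by
        have h := hcomp 1 t
        rw [hd1] at h
        exact h.neg
      have hgc : HasDerivAt (fun t => x t ^ 2 + y t ^ 2)
          ((2:ℕ) * x t ^ 1 * (1 - c * x t) + (2:ℕ) * y t ^ 1 * (-(c * y t))) t :=
        (hx1.pow 2).add (hy1.pow 2)
      have hgconst : HasDerivAt (fun t => x t ^ 2 + y t ^ 2) 0 t := by
        have hfe : (fun t => x t ^ 2 + y t ^ 2) = fun _ => ℓ ^ 2 := funext hxy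
        rw [hfe]; exact hasDerivAt_const t _
      have hceq : (2:ℕ) * x t ^ 1 * (1 - c * x t) + (2:ℕ) * y t ^ 1 * (-(c * y t)) = 0 :=
        hgc.unique hgconst
      push_cast at hceq
      have hcval : c * ℓ ^ 2 = x t := by
        linear_combination (-(1:ℝ)/2) * hceq - c * hxy t
      constructor
      · convert hx1 using 1
        field_simp
        linear_combination x t * hcval
      · have h2 : -(x t * y t) / ℓ ^ 2 = -(c * y t) := by
          rw [← hcval]
          field_simp
        rw [h2]
        exact hy1
    rcases key ℓ hℓ x y hxy (fun t => (hders t).1) (fun t => (hders t).2) with h | h | h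
    · left
      intro t
      have h1 := (h t).1
      have h2 := (h t).2
      rw [hxdef] at h1
      rw [hydef] at h2
      simp only at h1 h2
      ext i
      fin_cases i <;> simp [pt] <;> linarith
    · right; left
      intro t
      have h1 := (h t).1
      have h2 := (h t).2
      rw [hxdef] at h1
      rw [hydef] at h2
      simp only at h1 h2
      ext i
      fin_cases i <;> simp [pt] <;> linarith
    · right; right
      obtain ⟨t₀, ε, hεpm, hε⟩ := h
      refine ⟨t₀, -ε, by rcases hεpm with h | h <;> simp [h], ?_⟩
      intro t
      have h1 := (hε t).1
      have h2 := (hε t).2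
      rw [hxdef] at h1
      rw [hydef] at h2
      simp only at h1 h2
      ext i
      fin_cases i <;> simp [pt]
      · linarith
      · rw [show b t 1 = -(ε * ℓ / Real.cosh ((t - t₀) / ℓ)) by linarith]
        ring
  · intro t₀ t
    ext i
    fin_cases i <;> simp [pt] <;> ring
end
end

section
/- (Periodic-type geodesics are not metric lines.) Let ℓ > 0 and let (b, f) be a bike path of frame length ℓ on ℝ with unit-speed front track (‖f'(t)‖ = 1 for all t) such that for some constants T > 0 and 0 < L < T one has f(t + T) = f(t) + (L, 0) and b(t + T) = b(t) + (L, 0) for all t ∈ ℝ. Then (b, f) is not globally minimizing: there exist times t₀ < t₁ and a bike path of frame length ℓ on an interval [0, S] joining the configuration (b(t₀), f(t₀)) to the configuration (b(t₁), f(t₁)) whose length is strictly less than t₁ − t₀. -/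
noncomputable section

open Real

section Aux

lemma st_hasDerivAt (x : ℝ) :
    HasDerivAt Real.smoothTransition (deriv Real.smoothTransition x) x :=
  (((Real.smoothTransition.contDiff (n := 1)).differentiable (by norm_num)) x).hasDerivAt

/-- shifted transition -/
lemma st_shift_hasDerivAt (a t : ℝ) :
    HasDerivAt (fun s => Real.smoothTransition (s - a)) (deriv Real.smoothTransition (t - a)) t := by
  have := (st_hasDerivAt (t - a)).comp t ((hasDerivAt_id t).sub_const a)
  simpa [Function.comp_def] using this

def Wf (a t : ℝ) : ℝ :=
  1 - Real.smoothTransition t + Real.smoothTransition (t - a)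

def Wd (a t : ℝ) : ℝ :=
  deriv Real.smoothTransition (t - a) - deriv Real.smoothTransition t

lemma hasDerivAt_Wf (a t : ℝ) : HasDerivAt (Wf a) (Wd a t) t := by
  have h := ((hasDerivAt_const t (1:ℝ)).sub (st_hasDerivAt t)).add (st_shift_hasDerivAt a t)
  have : (0 - deriv Real.smoothTransition t) + deriv Real.smoothTransition (t - a) = Wd a t := by
    rw [Wd]; ring
  rw [this] at h
  exact h

def Gf (c t : ℝ) : ℝ := c * Real.smoothTransition ((t - 1) / c)

def Gd (c t : ℝ) : ℝ := deriv Real.smoothTransition ((t - 1) / c)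

lemma hasDerivAt_Gf {c : ℝ} (hc : c ≠ 0) (t : ℝ) : HasDerivAt (Gf c) (Gd c t) t := by
  have hinner : HasDerivAt (fun s : ℝ => (s - 1) / c) (1 / c) t := by
    simpa using ((hasDerivAt_id t).sub_const 1).div_const c
  have h := ((st_hasDerivAt ((t - 1)/c)).comp t hinner).const_mul c
  have : c * (deriv Real.smoothTransition ((t - 1)/c) * (1/c)) = Gd c t := by
    rw [Gd]; field_simp
  rw [this] at h
  exact h

end Aux

section Aux1b

lemma monotone_expNegInvGlue : Monotone expNegInvGlue := by
  intro x y hxy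
  rcases le_or_gt x 0 with hx | hx
  · rw [expNegInvGlue.zero_of_nonpos hx]; exact expNegInvGlue.nonneg y
  · have hy : 0 < y := lt_of_lt_of_le hx hxy
    simp only [expNegInvGlue, hx.not_ge, hy.not_ge, if_false]
    exact Real.exp_le_exp.2 (by
      have : y⁻¹ ≤ x⁻¹ := by
        apply inv_anti₀ hx hxy
      linarith)

lemma monotone_smoothTransition : Monotone Real.smoothTransition := by
  intro x y hxy
  have hdx := Real.smoothTransition.pos_denom x
  have hdy := Real.smoothTransition.pos_denom y
  rw [Real.smoothTransition, Real.smoothTransition, div_le_div_iff₀ hdx hdy]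
  have h1 : expNegInvGlue x ≤ expNegInvGlue y := monotone_expNegInvGlue hxy
  have h2 : expNegInvGlue (1 - y) ≤ expNegInvGlue (1 - x) :=
    monotone_expNegInvGlue (by linarith)
  nlinarith [expNegInvGlue.nonneg x, expNegInvGlue.nonneg (1-y)]

lemma monotone_hasDerivAt_nonneg {g : ℝ → ℝ} {d x : ℝ} (hg : Monotone g)
    (h : HasDerivAt g d x) : 0 ≤ d := by
  have h1 : Filter.Tendsto (slope g x) (nhdsWithin x (Set.Ioi x)) (nhds d) :=
    (hasDerivAt_iff_tendsto_slope.1 h).mono_left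
      (nhdsWithin_mono x (fun y hy => hy.ne'))
  refine ge_of_tendsto h1 ?_
  filter_upwards [self_mem_nhdsWithin] with y hy
  have hxy : x < y := hy
  rw [slope_def_field]
  exact div_nonneg (sub_nonneg.2 (hg hxy.le)) (sub_nonneg.2 hxy.le)

lemma dst_nonneg (x : ℝ) : 0 ≤ deriv Real.smoothTransition x :=
  monotone_hasDerivAt_nonneg monotone_smoothTransition (st_hasDerivAt x)

lemma dst_continuous : Continuous (deriv Real.smoothTransition) :=
  (Real.smoothTransition.contDiff (n := 2)).continuous_deriv (by norm_num)

lemma dst_eq_zero_of_neg {y : ℝ} (hy : y < 0) : deriv Real.smoothTransition y = 0 := by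
  have h : Real.smoothTransition =ᶠ[nhds y] (fun _ => (0:ℝ)) := by
    filter_upwards [Iio_mem_nhds hy] with z hz
    exact Real.smoothTransition.zero_of_nonpos (le_of_lt hz)
  rw [h.deriv_eq, deriv_const]

lemma dst_eq_zero_of_gt {y : ℝ} (hy : 1 < y) : deriv Real.smoothTransition y = 0 := by
  have h : Real.smoothTransition =ᶠ[nhds y] (fun _ => (1:ℝ)) := by
    filter_upwards [Ioi_mem_nhds hy] with z hz
    exact Real.smoothTransition.one_of_one_le (le_of_lt hz)
  rw [h.deriv_eq, deriv_const]

end Aux1b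

section Aux2

lemma pt_add (a b c d : ℝ) : pt a b + pt c d = pt (a+c) (b+d) := by
  ext i; fin_cases i <;> simp [pt]

lemma smul_pt (r a b : ℝ) : r • pt a b = pt (r*a) (r*b) := by
  ext i; fin_cases i <;> simp [pt]

lemma pt_coords (x : Plane) : pt (x 0) (x 1) = x := by
  ext i; fin_cases i <;> simp [pt]

lemma norm_pt (a b : ℝ) : ‖pt a b‖ = Real.sqrt (a^2 + b^2) := by
  rw [EuclideanSpace.norm_eq]
  simp [pt, Fin.sum_univ_two, sq_abs]

lemma norm_pt_le (a b : ℝ) : ‖pt a b‖ ≤ |a| + |b| := by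
  rw [norm_pt]
  have h : a^2 + b^2 ≤ (|a| + |b|)^2 := by
    nlinarith [sq_abs a, sq_abs b, abs_nonneg a, abs_nonneg b]
  calc Real.sqrt (a^2+b^2) ≤ Real.sqrt ((|a|+|b|)^2) := Real.sqrt_le_sqrt h
    _ = |a| + |b| := Real.sqrt_sq (by positivity)

def thf (θ₀ a t : ℝ) : ℝ := θ₀ * Wf a t

def bb (p : Plane) (c t : ℝ) : Plane := p + Gf c t • pt 1 0

def ffr (p : Plane) (ℓ θ₀ a c t : ℝ) : Plane :=
  bb p c t + (ℓ * Real.cos (thf θ₀ a t)) • pt 1 0 + (ℓ * Real.sin (thf θ₀ a t)) • pt 0 1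

def Fd (ℓ θ₀ a c t : ℝ) : Plane :=
  (Gd c t + ℓ * (-Real.sin (thf θ₀ a t) * (θ₀ * Wd a t))) • pt 1 0
    + (ℓ * (Real.cos (thf θ₀ a t) * (θ₀ * Wd a t))) • pt 0 1

lemma hasDerivAt_thf (θ₀ a t : ℝ) : HasDerivAt (thf θ₀ a) (θ₀ * Wd a t) t :=
  (hasDerivAt_Wf a t).const_mul θ₀

lemma hasDerivAt_bb (p : Plane) {c : ℝ} (hc : c ≠ 0) (t : ℝ) :
    HasDerivAt (bb p c) (Gd c t • pt 1 0) t :=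
  ((hasDerivAt_Gf hc t).smul_const (pt 1 0)).const_add p

lemma hasDerivAt_ffr (p : Plane) (ℓ θ₀ a : ℝ) {c : ℝ} (hc : c ≠ 0) (t : ℝ) :
    HasDerivAt (ffr p ℓ θ₀ a c) (Fd ℓ θ₀ a c t) t := by
  have hcos : HasDerivAt (fun s => ℓ * Real.cos (thf θ₀ a s))
      (ℓ * (-Real.sin (thf θ₀ a t) * (θ₀ * Wd a t))) t :=
    ((hasDerivAt_thf θ₀ a t).cos).const_mul ℓ
  have hsin : HasDerivAt (fun s => ℓ * Real.sin (thf θ₀ a s))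
      (ℓ * (Real.cos (thf θ₀ a t) * (θ₀ * Wd a t))) t :=
    ((hasDerivAt_thf θ₀ a t).sin).const_mul ℓ
  have h := ((hasDerivAt_bb p hc t).add (hcos.smul_const (pt 1 0))).add
    (hsin.smul_const (pt 0 1))
  have heq : Gd c t • pt 1 0 + (ℓ * (-Real.sin (thf θ₀ a t) * (θ₀ * Wd a t))) • pt 1 0
      + (ℓ * (Real.cos (thf θ₀ a t) * (θ₀ * Wd a t))) • pt 0 1 = Fd ℓ θ₀ a c t := by
    rw [Fd, add_smul]
  rw [heq] at h
  exact h

end Aux2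

section Aux3

lemma pt_zero : pt 0 0 = 0 := by
  ext i; fin_cases i <;> simp [pt]

lemma norm_plane (x : Plane) : ‖x‖ = Real.sqrt ((x 0)^2 + (x 1)^2) := by
  nth_rewrite 1 [← pt_coords x]
  rw [norm_pt]

lemma ffr_sub_bb (p : Plane) (ℓ θ₀ a c t : ℝ) :
    ffr p ℓ θ₀ a c t - bb p c t
      = pt (ℓ * Real.cos (thf θ₀ a t)) (ℓ * Real.sin (thf θ₀ a t)) := by
  rw [ffr, add_assoc, add_sub_cancel_left, smul_pt, smul_pt, pt_add]
  norm_num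

lemma dst_nonneg' (x : ℝ) : 0 ≤ deriv Real.smoothTransition x := dst_nonneg x

lemma norm_Fd_le {ℓ : ℝ} (hl : 0 ≤ ℓ) (θ₀ a c t : ℝ) :
    ‖Fd ℓ θ₀ a c t‖ ≤ Gd c t + 2 * ℓ * |θ₀| *
      (deriv Real.smoothTransition t + deriv Real.smoothTransition (t - a)) := by
  have hFd : Fd ℓ θ₀ a c t
      = pt (Gd c t + ℓ * (-Real.sin (thf θ₀ a t) * (θ₀ * Wd a t)))
           (ℓ * (Real.cos (thf θ₀ a t) * (θ₀ * Wd a t))) := by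
    rw [Fd, smul_pt, smul_pt, pt_add]; norm_num
  rw [hFd]
  refine le_trans (norm_pt_le _ _) ?_
  have hd1 := dst_nonneg t
  have hd2 := dst_nonneg (t - a)
  have hGd := dst_nonneg ((t - 1)/c)
  have hWd : |Wd a t| ≤ deriv Real.smoothTransition t + deriv Real.smoothTransition (t - a) := by
    rw [Wd]
    calc |deriv Real.smoothTransition (t - a) - deriv Real.smoothTransition t|
        ≤ |deriv Real.smoothTransition (t - a)| + |deriv Real.smoothTransition t| :=
          abs_sub _ _
      _ = deriv Real.smoothTransition t + deriv Real.smoothTransition (t - a) := by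
          rw [abs_of_nonneg hd1, abs_of_nonneg hd2]; ring
  have hsin : |Real.sin (thf θ₀ a t)| ≤ 1 := Real.abs_sin_le_one _
  have hcos : |Real.cos (thf θ₀ a t)| ≤ 1 := Real.abs_cos_le_one _
  have key : ∀ s : ℝ, |s| ≤ 1 → ℓ * (|s| * (|θ₀| * |Wd a t|))
      ≤ ℓ * |θ₀| * (deriv Real.smoothTransition t + deriv Real.smoothTransition (t - a)) := by
    intro s hs
    have h1 : |s| * (|θ₀| * |Wd a t|) ≤ |θ₀| * |Wd a t| :=
      mul_le_of_le_one_left (by positivity) hs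
    have h2 : |θ₀| * |Wd a t| ≤ |θ₀| * (deriv Real.smoothTransition t + deriv Real.smoothTransition (t - a)) :=
      mul_le_mul_of_nonneg_left hWd (abs_nonneg θ₀)
    calc ℓ * (|s| * (|θ₀| * |Wd a t|)) ≤ ℓ * (|θ₀| * (deriv Real.smoothTransition t + deriv Real.smoothTransition (t - a))) :=
          mul_le_mul_of_nonneg_left (le_trans h1 h2) hl
      _ = ℓ * |θ₀| * (deriv Real.smoothTransition t + deriv Real.smoothTransition (t - a)) := by ring
  have h1 : |Gd c t + ℓ * (-Real.sin (thf θ₀ a t) * (θ₀ * Wd a t))|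
      ≤ Gd c t + ℓ * |θ₀| * (deriv Real.smoothTransition t + deriv Real.smoothTransition (t - a)) := by
    refine le_trans (abs_add_le _ _) ?_
    have : |ℓ * (-Real.sin (thf θ₀ a t) * (θ₀ * Wd a t))|
        ≤ ℓ * |θ₀| * (deriv Real.smoothTransition t + deriv Real.smoothTransition (t - a)) := by
      rw [abs_mul, abs_mul, abs_neg, abs_mul, abs_of_nonneg hl]
      exact key _ (Real.abs_sin_le_one _)
    rw [abs_of_nonneg]
    · linarith
    · exact hGd
  have h2 : |ℓ * (Real.cos (thf θ₀ a t) * (θ₀ * Wd a t))|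
      ≤ ℓ * |θ₀| * (deriv Real.smoothTransition t + deriv Real.smoothTransition (t - a)) := by
    rw [abs_mul, abs_mul, abs_mul, abs_of_nonneg hl]
    exact key _ (Real.abs_cos_le_one _)
  have : Gd c t = deriv Real.smoothTransition ((t-1)/c) := rfl
  nlinarith [abs_nonneg θ₀]

lemma continuous_dst : Continuous (deriv Real.smoothTransition) := dst_continuous

lemma continuous_Gd (c : ℝ) : Continuous (Gd c) :=
  dst_continuous.comp ((continuous_id.sub continuous_const).div_const c)

lemma continuous_Wd (a : ℝ) : Continuous (Wd a) :=
  (dst_continuous.comp (continuous_id.sub continuous_const)).sub dst_continuous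

lemma continuous_thf (θ₀ a : ℝ) : Continuous (thf θ₀ a) := by
  apply continuous_const.mul
  exact (continuous_const.sub Real.smoothTransition.continuous).add
    (Real.smoothTransition.continuous.comp (continuous_id.sub continuous_const))

lemma continuous_Fd (ℓ θ₀ a c : ℝ) : Continuous (Fd ℓ θ₀ a c) := by
  apply Continuous.add
  · exact ((continuous_Gd c).add (continuous_const.mul
      (((Real.continuous_sin.comp (continuous_thf θ₀ a)).neg).mul
        (continuous_const.mul (continuous_Wd a))))).smul continuous_const
  · exact (continuous_const.mul
      ((Real.continuous_cos.comp (continuous_thf θ₀ a)).mul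
        (continuous_const.mul (continuous_Wd a)))).smul continuous_const

end Aux3


set_option maxHeartbeats 1000000 in
theorem stmt13 (ℓ : ℝ) (hℓ : 0 < ℓ) (b f : ℝ → Plane)
    (hbike : IsBikePath ℓ Set.univ b f)
    (hunit : ∀ t : ℝ, ‖deriv f t‖ = 1)
    (T L : ℝ) (hT : 0 < T) (hL0 : 0 < L) (hLT : L < T)
    (hfper : ∀ t : ℝ, f (t + T) = f t + pt L 0)
    (hbper : ∀ t : ℝ, b (t + T) = b t + pt L 0) :
    ∃ t₀ t₁ : ℝ, t₀ < t₁ ∧ ∃ S : ℝ, 0 ≤ S ∧ ∃ b' f' : ℝ → Plane,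
      IsBikePath ℓ (Set.Icc 0 S) b' f' ∧
      b' 0 = b t₀ ∧ f' 0 = f t₀ ∧ b' S = b t₁ ∧ f' S = f t₁ ∧
      (∫ t in (0:ℝ)..S, ‖deriv f' t‖) < t₁ - t₀ := by
  obtain ⟨hbd, hfd, hlen, hns⟩ := hbike
  have hTL : 0 < T - L := by linarith
  obtain ⟨n, hn⟩ := exists_nat_gt (4 * π * ℓ / (T - L))
  have hn4 : 4 * π * ℓ < n * (T - L) := by rwa [div_lt_iff₀ hTL] at hn
  have hnpos : 0 < (n : ℝ) := by
    have h4 : 0 < 4 * π * ℓ / (T - L) := by positivity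
    linarith
  set c : ℝ := n * L with hc_def
  have hc : 0 < c := mul_pos hnpos hL0
  set a : ℝ := c + 1 with ha_def
  set S : ℝ := c + 2 with hS_def
  -- the initial frame direction
  have hnorm0 : ‖f 0 - b 0‖ = ℓ := hlen 0 trivial
  set v0 : ℝ := (f 0 - b 0) 0 with hv0
  set v1 : ℝ := (f 0 - b 0) 1 with hv1
  have hsq : Real.sqrt (v0^2 + v1^2) = ℓ := by
    rw [← hnorm0, norm_plane]
  set z : ℂ := ⟨v0, v1⟩ with hz_def
  have habs : ‖z‖ = ℓ := by
    rw [Complex.norm_def, Complex.normSq_mk]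
    rw [show v0 * v0 + v1 * v1 = v0^2 + v1^2 by ring]
    exact hsq
  have hzne : z ≠ 0 := by
    intro h
    rw [h, norm_zero] at habs
    linarith
  set θ₀ : ℝ := Complex.arg z with hθ₀_def
  have hθ₀pi : |θ₀| ≤ π := Complex.abs_arg_le_pi z
  have hcos0 : ℓ * Real.cos θ₀ = v0 := by
    rw [hθ₀_def, Complex.cos_arg hzne, habs]
    field_simp [hz_def]
    rfl
  have hsin0 : ℓ * Real.sin θ₀ = v1 := by
    rw [hθ₀_def, Complex.sin_arg, habs]
    field_simp [hz_def]
    rfl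
  -- values of the transition function
  have hstS : Real.smoothTransition ((S - 1)/c) = 1 := by
    apply Real.smoothTransition.one_of_one_le
    rw [le_div_iff₀ hc]; simp [hS_def]; linarith
  have hst0' : Real.smoothTransition ((0 - 1)/c) = 0 := by
    apply Real.smoothTransition.zero_of_nonpos
    apply div_nonpos_of_nonpos_of_nonneg <;> linarith
  have hW0 : Wf a 0 = 1 := by
    rw [Wf, Real.smoothTransition.zero,
      Real.smoothTransition.zero_of_nonpos (by simp [ha_def]; linarith)]
    ring
  have hWS : Wf a S = 1 := by
    rw [Wf, Real.smoothTransition.one_of_one_le (by simp [hS_def]; linarith),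
      show S - a = 1 by simp [hS_def, ha_def]; ring, Real.smoothTransition.one]
    ring
  have hth0 : thf θ₀ a 0 = θ₀ := by rw [thf, hW0, mul_one]
  have hthS : thf θ₀ a S = θ₀ := by rw [thf, hWS, mul_one]
  -- the candidate path
  set b' : ℝ → Plane := bb (b 0) c with hb'_def
  set f' : ℝ → Plane := ffr (b 0) ℓ θ₀ a c with hf'_def
  have hsub : ∀ t, f' t - b' t = pt (ℓ * Real.cos (thf θ₀ a t)) (ℓ * Real.sin (thf θ₀ a t)) :=
    fun t => ffr_sub_bb (b 0) ℓ θ₀ a c t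
  have hderb : ∀ t, deriv b' t = Gd c t • pt 1 0 :=
    fun t => (hasDerivAt_bb (b 0) hc.ne' t).deriv
  have hderf : ∀ t, deriv f' t = Fd ℓ θ₀ a c t :=
    fun t => (hasDerivAt_ffr (b 0) ℓ θ₀ a hc.ne' t).deriv
  -- periodic displacement
  have hper : ∀ k : ℕ, b ((k : ℝ) * T) = b 0 + pt ((k : ℝ) * L) 0 ∧
      f ((k : ℝ) * T) = f 0 + pt ((k : ℝ) * L) 0 := by
    intro k
    induction k with
    | zero => simp [pt_zero]
    | succ k ih =>
      have hcast : ((k + 1 : ℕ) : ℝ) * T = (k : ℝ) * T + T := by push_cast; ring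
      have hcast' : ((k + 1 : ℕ) : ℝ) * L = (k : ℝ) * L + L := by push_cast; ring
      constructor
      · rw [hcast, hbper, ih.1, hcast', add_assoc, pt_add, add_zero]
      · rw [hcast, hfper, ih.2, hcast', add_assoc, pt_add, add_zero]
  refine ⟨0, n * T, by positivity, S, by positivity, b', f', ?_, ?_, ?_, ?_, ?_, ?_⟩
  · -- IsBikePath
    refine ⟨fun t _ => (hasDerivAt_bb (b 0) hc.ne' t).differentiableAt,
      fun t _ => (hasDerivAt_ffr (b 0) ℓ θ₀ a hc.ne' t).differentiableAt,
      fun t _ => ?_, fun t _ => ?_⟩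
    · rw [hsub t, norm_pt]
      rw [show (ℓ * Real.cos (thf θ₀ a t))^2 + (ℓ * Real.sin (thf θ₀ a t))^2 = ℓ^2 by
        nlinarith [Real.sin_sq_add_cos_sq (thf θ₀ a t)]]
      exact Real.sqrt_sq hℓ.le
    · -- no-skid
      by_cases h1 : 1 ≤ t ∧ t ≤ a
      · -- frame horizontal here
        have hWt : Wf a t = 0 := by
          rw [Wf, Real.smoothTransition.one_of_one_le h1.1,
            Real.smoothTransition.zero_of_nonpos (by linarith [h1.2])]
          ring
        have htht : thf θ₀ a t = 0 := by rw [thf, hWt, mul_zero]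
        refine ⟨Gd c t / ℓ, ?_⟩
        rw [hderb t, hsub t, htht, Real.cos_zero, Real.sin_zero, mul_one, mul_zero,
          smul_pt, smul_pt]
        congr 1 <;> field_simp <;> ring
      · -- G is flat here
        have hGd0 : Gd c t = 0 := by
          rw [Gd]
          rcases not_and_or.1 h1 with h | h
          · exact dst_eq_zero_of_neg (by
              apply div_neg_of_neg_of_pos _ hc
              push_neg at h; linarith)
          · exact dst_eq_zero_of_gt (by
              push_neg at h
              rw [lt_div_iff₀ hc]
              simp only [ha_def] at h; linarith)
        exact ⟨0, by rw [hderb t, hGd0, zero_smul, zero_smul]⟩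
  · -- b' 0 = b 0
    rw [hb'_def, bb, Gf, hst0', mul_zero, zero_smul, add_zero]
  · -- f' 0 = f 0
    rw [hf'_def, ffr, hth0]
    rw [show bb (b 0) c 0 = b 0 by rw [bb, Gf, hst0', mul_zero, zero_smul, add_zero]]
    rw [smul_pt, smul_pt, add_assoc, pt_add]
    norm_num
    rw [hcos0, hsin0, hv0, hv1, pt_coords]
    abel
  · -- b' S = b (n * T)
    rw [(hper n).1, hb'_def, bb, Gf, hstS, mul_one, smul_pt, mul_one, mul_zero]
  · -- f' S = f (n * T)
    rw [(hper n).2, hf'_def, ffr, hthS]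
    rw [show bb (b 0) c S = b 0 + pt ((n:ℝ) * L) 0 by
      rw [bb, Gf, hstS, mul_one, smul_pt, mul_one, mul_zero]]
    rw [smul_pt, smul_pt, add_assoc, pt_add]
    norm_num
    rw [hcos0, hsin0, hv0, hv1, pt_coords]
    abel
  · -- the length estimate
    have hrw : (fun t => ‖deriv f' t‖) = fun t => ‖Fd ℓ θ₀ a c t‖ :=
      funext fun t => by rw [hderf t]
    rw [hrw]
    have hcont3 : Continuous fun t : ℝ => deriv Real.smoothTransition (t - a) :=
      dst_continuous.comp (continuous_id.sub continuous_const)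
    have hcontsum : Continuous fun t : ℝ =>
        deriv Real.smoothTransition t + deriv Real.smoothTransition (t - a) :=
      dst_continuous.add hcont3
    have hcontmul : Continuous fun t : ℝ => 2 * ℓ * |θ₀| *
        (deriv Real.smoothTransition t + deriv Real.smoothTransition (t - a)) :=
      continuous_const.mul hcontsum
    have hcontD : Continuous fun t : ℝ => Gd c t + 2 * ℓ * |θ₀| *
        (deriv Real.smoothTransition t + deriv Real.smoothTransition (t - a)) :=
      (continuous_Gd c).add hcontmul
    have hS0 : (0 : ℝ) ≤ S := by positivity
    have hmono : (∫ t in (0:ℝ)..S, ‖Fd ℓ θ₀ a c t‖) ≤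
        ∫ t in (0:ℝ)..S, (Gd c t + 2 * ℓ * |θ₀| *
          (deriv Real.smoothTransition t + deriv Real.smoothTransition (t - a))) := by
      apply intervalIntegral.integral_mono_on hS0
      · exact ((continuous_Fd ℓ θ₀ a c).norm).intervalIntegrable 0 S
      · exact hcontD.intervalIntegrable 0 S
      · exact fun t _ => norm_Fd_le hℓ.le θ₀ a c t
    have hI1 : (∫ t in (0:ℝ)..S, Gd c t) = c := by
      rw [intervalIntegral.integral_eq_sub_of_hasDerivAt
        (fun t _ => hasDerivAt_Gf hc.ne' t) ((continuous_Gd c).intervalIntegrable 0 S)]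
      rw [Gf, Gf, hstS, hst0', mul_one, mul_zero, sub_zero]
    have hI2 : (∫ t in (0:ℝ)..S, deriv Real.smoothTransition t) = 1 := by
      rw [intervalIntegral.integral_eq_sub_of_hasDerivAt
        (fun t _ => st_hasDerivAt t) (dst_continuous.intervalIntegrable 0 S)]
      rw [Real.smoothTransition.one_of_one_le (by simp [hS_def]; linarith),
        Real.smoothTransition.zero]
      ring
    have hI3 : (∫ t in (0:ℝ)..S, deriv Real.smoothTransition (t - a)) = 1 := by
      rw [intervalIntegral.integral_eq_sub_of_hasDerivAt
        (fun t _ => st_shift_hasDerivAt a t) (hcont3.intervalIntegrable 0 S)]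
      rw [show S - a = 1 by simp [hS_def, ha_def]; ring, Real.smoothTransition.one,
        Real.smoothTransition.zero_of_nonpos (by simp [ha_def]; linarith)]
      ring
    have hID : (∫ t in (0:ℝ)..S, (Gd c t + 2 * ℓ * |θ₀| *
        (deriv Real.smoothTransition t + deriv Real.smoothTransition (t - a))))
        = c + 2 * ℓ * |θ₀| * 2 := by
      rw [intervalIntegral.integral_add ((continuous_Gd c).intervalIntegrable 0 S)
        (hcontmul.intervalIntegrable 0 S)]
      rw [intervalIntegral.integral_const_mul]
      rw [intervalIntegral.integral_add (dst_continuous.intervalIntegrable 0 S)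
        (hcont3.intervalIntegrable 0 S)]
      rw [hI1, hI2, hI3]
      ring
    have hbound : (∫ t in (0:ℝ)..S, ‖Fd ℓ θ₀ a c t‖) ≤ c + 4 * ℓ * |θ₀| := by
      rw [hID] at hmono; linarith
    have hfinal : c + 4 * ℓ * |θ₀| < (n : ℝ) * T - 0 := by
      have h1 : 4 * ℓ * |θ₀| ≤ 4 * ℓ * π := by
        apply mul_le_mul_of_nonneg_left hθ₀pi (by linarith)
      rw [hc_def]
      nlinarith
    linarith
end
end

section
/- (Automorphisms of se₂ preserving the contact plane.) Equip ℝ³ with basis X₁, X₂, X₃ and the Lie bracket determined by [X₁, X₂] = X₃, [X₂, X₃] = X₁, [X₁, X₃] = 0 (the Lie algebra se₂ of the group of rigid motions of the plane, in the frame adapted to the bicycle contact plane). Let φ : ℝ³ → ℝ³ be a linear bijection such that φ[u, w] = [φu, φw] for all u, w ∈ ℝ³, φ maps the plane D = span{X₁, X₂} onto itself, and the restriction of φ to D is an isometry for the inner product in which X₁, X₂ are orthonormal. Then φ is one of exactly four maps: the identity, φ₁ = diag(1, −1, −1), φ₂ = diag(−1, −1, 1), or φ₁φ₂ = diag(−1,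 1, −1) (in the basis X₁, X₂, X₃). These four maps form a group isomorphic to ℤ/2 × ℤ/2. -/
noncomputable section

/-- The Lie bracket of `se₂` on `ℝ³` in the basis `X₁, X₂, X₃` with
`[X₁, X₂] = X₃`, `[X₂, X₃] = X₁`, `[X₁, X₃] = 0`. -/
def se2Bracket (u w : Fin 3 → ℝ) : Fin 3 → ℝ :=
  ![u 1 * w 2 - u 2 * w 1, 0, u 0 * w 1 - u 1 * w 0]

/-- The contact plane `D = span{X₁, X₂}`. -/
def contactPlane : Set (Fin 3 → ℝ) := {u | u 2 = 0}

/-- `φ₁ = diag(1, −1, −1)` in the basis `X₁, X₂, X₃`. -/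
def flip1 (u : Fin 3 → ℝ) : Fin 3 → ℝ := ![u 0, -u 1, -u 2]

/-- `φ₂ = diag(−1, −1, 1)` in the basis `X₁, X₂, X₃`. -/
def flip2 (u : Fin 3 → ℝ) : Fin 3 → ℝ := ![-u 0, -u 1, u 2]

/-- `φ₁φ₂ = diag(−1, 1, −1)` in the basis `X₁, X₂, X₃`. -/
def flip12 (u : Fin 3 → ℝ) : Fin 3 → ℝ := ![-u 0, u 1, -u 2]

private lemma decomp (u : Fin 3 → ℝ) :
    u = u 0 • ![(1:ℝ),0,0] + u 1 • ![(0:ℝ),1,0] + u 2 • ![(0:ℝ),0,1] := by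
  funext i; fin_cases i <;> simp

def sgn : ZMod 2 → ℝ := fun a => if a = 0 then 1 else -1

def eMap (g : Multiplicative (ZMod 2 × ZMod 2)) : (Fin 3 → ℝ) → (Fin 3 → ℝ) :=
  fun u => ![sgn g.toAdd.2 * u 0, sgn (g.toAdd.1 + g.toAdd.2) * u 1, sgn g.toAdd.1 * u 2]

private lemma sgn_add (a b : ZMod 2) : sgn (a + b) = sgn a * sgn b := by
  have hc : ∀ x : ZMod 2, x = 0 ∨ x = 1 := by decide
  rcases hc a with rfl | rfl <;> rcases hc b with rfl | rfl <;> (norm_num [sgn]; try decide)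

private lemma sgn_inj : Function.Injective sgn := by
  intro x y hxy
  have hc : ∀ x : ZMod 2, x = 0 ∨ x = 1 := by decide
  rcases hc x with rfl | rfl <;> rcases hc y with rfl | rfl <;> first | rfl | (norm_num [sgn] at hxy)

private lemma two_eq_zero : (1 + 1 : ZMod 2) = 0 := by decide

private lemma zmod2_cases (x : ZMod 2) : x = 0 ∨ x = 1 := by
  fin_cases x
  · left; rfl
  · right; rfl

private lemma eMap_one : eMap 1 = id := by
  funext u i; fin_cases i <;> (norm_num [eMap, sgn]; try rfl)

private lemma eMap_f1 : eMap (Multiplicative.ofAdd ((1:ZMod 2),(0:ZMod 2))) = flip1 := by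
  funext u i; fin_cases i <;> norm_num [eMap, sgn, flip1]

private lemma eMap_f2 : eMap (Multiplicative.ofAdd ((0:ZMod 2),(1:ZMod 2))) = flip2 := by
  funext u i; fin_cases i <;> norm_num [eMap, sgn, flip2]

private lemma eMap_f12 : eMap (Multiplicative.ofAdd ((1:ZMod 2),(1:ZMod 2))) = flip12 := by
  funext u i; fin_cases i <;> norm_num [eMap, sgn, flip12, two_eq_zero]

private lemma eMap_cases (g : Multiplicative (ZMod 2 × ZMod 2)) :
    eMap g = id ∨ eMap g = flip1 ∨ eMap g = flip2 ∨ eMap g = flip12 := by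
  rcases zmod2_cases g.toAdd.1 with hx | hx <;> rcases zmod2_cases g.toAdd.2 with hy | hy
  · left; funext u i; fin_cases i <;> (norm_num [eMap, sgn, hx, hy]; try rfl)
  · right; right; left; funext u i; fin_cases i <;> norm_num [eMap, sgn, hx, hy, flip2]
  · right; left; funext u i; fin_cases i <;> norm_num [eMap, sgn, hx, hy, flip1]
  · right; right; right; funext u i; fin_cases i <;>
      norm_num [eMap, sgn, hx, hy, flip12, two_eq_zero]

theorem stmt14 :
    (∀ φ : (Fin 3 → ℝ) ≃ₗ[ℝ] (Fin 3 → ℝ),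
      (∀ u w, φ (se2Bracket u w) = se2Bracket (φ u) (φ w)) →
      (φ '' contactPlane = contactPlane) →
      (∀ u w : Fin 3 → ℝ, u ∈ contactPlane → w ∈ contactPlane →
        φ u 0 * φ w 0 + φ u 1 * φ w 1 = u 0 * w 0 + u 1 * w 1) →
      ((∀ u, φ u = u) ∨ (∀ u, φ u = flip1 u) ∨ (∀ u, φ u = flip2 u) ∨
        (∀ u, φ u = flip12 u))) ∧
    (∃ e : Multiplicative (ZMod 2 × ZMod 2) → ((Fin 3 → ℝ) → (Fin 3 → ℝ)),
      Function.Injective e ∧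
      Set.range e = {id, flip1, flip2, flip12} ∧
      e 1 = id ∧ ∀ g h, e (g * h) = e g ∘ e h) := by
  constructor
  · intro φ hbr himg hmet
    have hE0 : (![(1:ℝ),0,0]) ∈ contactPlane := by simp [contactPlane]
    have hE1 : (![(0:ℝ),1,0]) ∈ contactPlane := by simp [contactPlane]
    have h0 : φ ![(1:ℝ),0,0] 2 = 0 := by
      have := Set.mem_image_of_mem φ hE0; rw [himg] at this; exact this
    have h1 : φ ![(0:ℝ),1,0] 2 = 0 := by
      have := Set.mem_image_of_mem φ hE1; rw [himg] at this; exact this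
    set a := φ ![(1:ℝ),0,0] 0 with ha
    set b := φ ![(1:ℝ),0,0] 1 with hb
    set c := φ ![(0:ℝ),1,0] 0 with hc
    set d := φ ![(0:ℝ),1,0] 1 with hd
    have m1 : a * a + b * b = 1 := by
      have := hmet _ _ hE0 hE0; simpa using this
    have m2 : a * c + b * d = 0 := by
      have := hmet _ _ hE0 hE1; simpa using this
    have m3 : c * c + d * d = 1 := by
      have := hmet _ _ hE1 hE1; simpa using this
    have br01 : se2Bracket ![(1:ℝ),0,0] ![(0:ℝ),1,0] = ![(0:ℝ),0,1] := by
      funext i; fin_cases i <;> simp [se2Bracket]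
    have hphi2 : φ ![(0:ℝ),0,1] = se2Bracket (φ ![(1:ℝ),0,0]) (φ ![(0:ℝ),1,0]) := by
      rw [← br01]; exact hbr _ _
    have e20 : φ ![(0:ℝ),0,1] 0 = 0 := by
      rw [hphi2]; simp [se2Bracket, h0, h1]
    have e21 : φ ![(0:ℝ),0,1] 1 = 0 := by
      rw [hphi2]; simp [se2Bracket]
    have e22 : φ ![(0:ℝ),0,1] 2 = a * d - b * c := by
      rw [hphi2]; simp [se2Bracket, ha, hb, hc, hd]
    have br12 : se2Bracket ![(0:ℝ),1,0] ![(0:ℝ),0,1] = ![(1:ℝ),0,0] := by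
      funext i; fin_cases i <;> simp [se2Bracket]
    have hphi0 : φ ![(1:ℝ),0,0] = se2Bracket (φ ![(0:ℝ),1,0]) (φ ![(0:ℝ),0,1]) := by
      rw [← br12]; exact hbr _ _
    have ea : a = d * (a * d - b * c) := by
      have h' := congrFun hphi0 0
      rw [← ha] at h'
      have h'' : se2Bracket (φ ![(0:ℝ),1,0]) (φ ![(0:ℝ),0,1]) 0 = d * (a * d - b * c) := by
        simp only [se2Bracket, Matrix.cons_val_zero]
        rw [h1, e21, e22, ← hd]
        ring
      exact h'.trans h''
    have eb : b = 0 := by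
      have := congrFun hphi0 1
      rw [← hb] at this
      rw [this]
      simp [se2Bracket]
    have ha2 : a = 1 ∨ a = -1 := by
      rw [eb] at m1; exact mul_self_eq_one_iff.mp (by linarith)
    have hcz : c = 0 := by
      rw [eb] at m2
      rcases ha2 with h | h <;> rw [h] at m2 <;> linarith
    have hd2 : d = 1 ∨ d = -1 := by
      rw [hcz] at m3; exact mul_self_eq_one_iff.mp (by linarith)
    have key : ∀ u : Fin 3 → ℝ,
        φ u = u 0 • φ ![(1:ℝ),0,0] + u 1 • φ ![(0:ℝ),1,0] + u 2 • φ ![(0:ℝ),0,1] := by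
      intro u
      conv_lhs => rw [decomp u]
      simp only [map_add, map_smul]
    rcases ha2 with hA | hA <;> rcases hd2 with hD | hD
    · left
      intro u
      rw [key u]; funext i; fin_cases i <;>
        simp [← ha, ← hb, ← hc, ← hd, hA, hD, eb, hcz, h0, h1, e20, e21, e22] <;> ring
    · right; left
      intro u
      rw [key u]; funext i; fin_cases i <;>
        simp [flip1, ← ha, ← hb, ← hc, ← hd, hA, hD, eb, hcz, h0, h1, e20, e21, e22] <;> ring
    · right; right; right
      intro u
      rw [key u]; funext i; fin_cases i <;>
        simp [flip12, ← ha, ← hb, ← hc, ← hd, hA, hD, eb, hcz, h0, h1, e20, e21, e22] <;> ring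
    · right; right; left
      intro u
      rw [key u]; funext i; fin_cases i <;>
        simp [flip2, ← ha, ← hb, ← hc, ← hd, hA, hD, eb, hcz, h0, h1, e20, e21, e22] <;> ring
  · refine ⟨eMap, ?_, ?_, eMap_one, ?_⟩
    · intro g h hgh
      have h0 := congrFun (congrFun hgh ![1,1,1]) 0
      have h2 := congrFun (congrFun hgh ![1,1,1]) 2
      simp [eMap] at h0 h2
      exact Multiplicative.toAdd.injective (Prod.ext (sgn_inj h2) (sgn_inj h0))
    · ext f
      constructor
      · rintro ⟨g, rfl⟩
        rcases eMap_cases g with h | h | h | h <;> rw [h] <;> simp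
      · intro hf
        rcases hf with h | h | h | h
        · exact ⟨1, by rw [eMap_one, h]⟩
        · exact ⟨_, by rw [eMap_f1, h]⟩
        · exact ⟨_, by rw [eMap_f2, h]⟩
        · exact ⟨_, by rw [eMap_f12, h]⟩
    · intro g h
      funext u i
      fin_cases i <;> simp [eMap, sgn_add, toAdd_mul] <;> ring
end
end
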